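/- For any p ∈ [1,∞], the functional μ ↦ ‖μ‖_{pK} = inf_{ξ ∈ M(X,0)} (‖ξ‖_{KR}^p + ‖μ − ξ‖_{TV}^p)^{1/p} is a norm on the space M(X) of finite signed Borel measures on a compact metric space X. -/

import Mathlib

open MeasureTheory ENNReal Filter Topology

noncomputable section

/-- The two-dimensional `ℓ^p` expression, interpreted as a maximum when `p = ∞`. -/
def lp2 (p : ℝ≥0∞) (a b : ℝ) : ℝ :=
  if p = ∞ then max a b else (a ^ p.toReal + b ^ p.toReal) ^ (1 / p.toReal)

/-- Hölder conjugacy of `p, q ∈ [1, ∞]`. -/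
def HolderConj (p q : ℝ≥0∞) : Prop := 1 ≤ p ∧ 1 ≤ q ∧ 1 / p + 1 / q = 1

variable {X : Type*} [MeasurableSpace X]

/-- Total variation norm of a finite signed Borel measure. -/
def TVnorm (s : SignedMeasure X) : ℝ := (s.totalVariation Set.univ).toReal

/-- Integral of a function against a signed measure. -/
def sIntegral (s : SignedMeasure X) (f : X → ℝ) : ℝ :=
  ∫ x, f x ∂s.toJordanDecomposition.posPart - ∫ x, f x ∂s.toJordanDecomposition.negPart

/-- The Kantorovich–Rubinstein norm of a (zero-charge) signed measure. -/
def KRnorm [PseudoMetricSpace X] (ξ : SignedMeasure X) : ℝ :=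
  sInf {r : ℝ | ∃ π : Measure (X × X), IsFiniteMeasure π ∧
    (∀ A : Set X, MeasurableSet A →
      ξ A = (π (Set.univ ×ˢ A)).toReal - (π (A ×ˢ Set.univ)).toReal) ∧
    r = ∫ z, dist z.1 z.2 ∂π}

/-- The `p`-Kantorovich norm on finite signed measures. -/
def pKnorm [PseudoMetricSpace X] (p : ℝ≥0∞) (μ : SignedMeasure X) : ℝ :=
  sInf {r : ℝ | ∃ ξ : SignedMeasure X, ξ Set.univ = 0 ∧
    r = lp2 p (KRnorm ξ) (TVnorm (μ - ξ))}

/-- The Lipschitz constant (seminorm) of `f`. -/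
def lipConst [PseudoMetricSpace X] (f : X → ℝ) : ℝ :=
  sInf {K : ℝ | 0 ≤ K ∧ ∀ x y, |f x - f y| ≤ K * dist x y}

/-- The sup norm of `f`. -/
def supNorm (f : X → ℝ) : ℝ := ⨆ x, |f x|

/-- The `q`-Lipschitz norm. -/
def qLnorm [PseudoMetricSpace X] (q : ℝ≥0∞) (f : X → ℝ) : ℝ :=
  lp2 q (lipConst f) (supNorm f)

/-- The support of a measure: points all of whose open neighbourhoods have
positive measure. -/
def msupport {Y : Type*} [TopologicalSpace Y] [MeasurableSpace Y] (π : Measure Y) : Set Y :=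
  {y | ∀ U : Set Y, IsOpen U → y ∈ U → π U ≠ 0}

end

set_option linter.unusedSectionVars false

section lp2lemmas
variable {p : ℝ≥0∞} (hp : 1 ≤ p) {a b a' b' c : ℝ}

lemma toReal_one_le (hp : 1 ≤ p) (hp' : p ≠ ∞) : 1 ≤ p.toReal := by
  rw [← ENNReal.toReal_one]
  exact ENNReal.toReal_mono hp' hp

lemma lp2_nonneg (ha : 0 ≤ a) (hb : 0 ≤ b) : 0 ≤ lp2 p a b := by
  unfold lp2
  split
  · exact le_max_of_le_left ha
  · positivity

lemma lp2_zero (hp : 1 ≤ p) : lp2 p 0 0 = 0 := by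
  unfold lp2
  split
  · simp
  · rename_i hne
    have ht : 0 < p.toReal := lt_of_lt_of_le one_pos (toReal_one_le hp hne)
    rw [Real.zero_rpow ht.ne', add_zero, Real.zero_rpow (by positivity)]

lemma lp2_mono (hp : 1 ≤ p) (ha : 0 ≤ a) (hb : 0 ≤ b) (ha' : a ≤ a') (hb' : b ≤ b') :
    lp2 p a b ≤ lp2 p a' b' := by
  unfold lp2
  split
  · exact max_le_max ha' hb'
  · rename_i hne
    have ht : 0 < p.toReal := lt_of_lt_of_le one_pos (toReal_one_le hp hne)
    apply Real.rpow_le_rpow (by positivity)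
    · exact add_le_add (Real.rpow_le_rpow ha ha' ht.le) (Real.rpow_le_rpow hb hb' ht.le)
    · positivity

lemma lp2_smul (hp : 1 ≤ p) (hc : 0 ≤ c) (ha : 0 ≤ a) (hb : 0 ≤ b) :
    lp2 p (c * a) (c * b) = c * lp2 p a b := by
  unfold lp2
  split
  · exact (mul_max_of_nonneg a b hc).symm
  · rename_i hne
    have ht : 0 < p.toReal := lt_of_lt_of_le one_pos (toReal_one_le hp hne)
    rw [Real.mul_rpow hc ha, Real.mul_rpow hc hb, ← mul_add,
      Real.mul_rpow (by positivity) (by positivity), ← Real.rpow_mul hc, mul_one_div,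
      div_self ht.ne', Real.rpow_one]
    
lemma le_lp2_left (hp : 1 ≤ p) (ha : 0 ≤ a) (hb : 0 ≤ b) : a ≤ lp2 p a b := by
  unfold lp2
  split
  · exact le_max_left a b
  · rename_i hne
    have ht : 0 < p.toReal := lt_of_lt_of_le one_pos (toReal_one_le hp hne)
    calc a = (a ^ p.toReal) ^ (1 / p.toReal) := by
            rw [← Real.rpow_mul ha, mul_one_div, div_self ht.ne', Real.rpow_one]
      _ ≤ _ := Real.rpow_le_rpow (by positivity) (le_add_of_nonneg_right (by positivity)) (by positivity)

lemma le_lp2_right (hp : 1 ≤ p) (ha : 0 ≤ a) (hb : 0 ≤ b) : b ≤ lp2 p a b := by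
  unfold lp2
  split
  · exact le_max_right a b
  · rename_i hne
    have ht : 0 < p.toReal := lt_of_lt_of_le one_pos (toReal_one_le hp hne)
    calc b = (b ^ p.toReal) ^ (1 / p.toReal) := by
            rw [← Real.rpow_mul hb, mul_one_div, div_self ht.ne', Real.rpow_one]
      _ ≤ _ := Real.rpow_le_rpow (by positivity) (le_add_of_nonneg_left (by positivity)) (by positivity)

lemma lp2_add_le (hp : 1 ≤ p) {a₁ a₂ b₁ b₂ : ℝ} (ha₁ : 0 ≤ a₁) (ha₂ : 0 ≤ a₂)
    (hb₁ : 0 ≤ b₁) (hb₂ : 0 ≤ b₂) :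
    lp2 p (a₁ + a₂) (b₁ + b₂) ≤ lp2 p a₁ b₁ + lp2 p a₂ b₂ := by
  unfold lp2
  split
  · exact max_add_add_le_max_add_max
  · rename_i hne
    have ht : 1 ≤ p.toReal := toReal_one_le hp hne
    have := Real.Lp_add_le_of_nonneg (s := Finset.univ) (f := ![a₁, b₁]) (g := ![a₂, b₂]) ht
      (by intro i _; fin_cases i <;> assumption) (by intro i _; fin_cases i <;> assumption)
    simpa [Fin.sum_univ_two] using this
end lp2lemmas

section TV
variable {X : Type*} [MeasurableSpace X]

lemma cont_integrable {Y : Type*} [MeasurableSpace Y] [TopologicalSpace Y] [OpensMeasurableSpace Y]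
    [CompactSpace Y] {f : Y → ℝ} (hf : Continuous f) (μ : Measure Y) [IsFiniteMeasure μ] :
    Integrable f μ := by
  obtain ⟨C, hC⟩ := (isCompact_range hf.norm).bddAbove
  exact (integrable_const C).mono' hf.aestronglyMeasurable
    (Filter.Eventually.of_forall fun x => hC (Set.mem_range_self x))

lemma sm_apply (s : SignedMeasure X) {A : Set X} (hA : MeasurableSet A) :
    s A = (s.toJordanDecomposition.posPart A).toReal -
      (s.toJordanDecomposition.negPart A).toReal := by
  conv_lhs => rw [← s.toSignedMeasure_toJordanDecomposition]
  rw [JordanDecomposition.toSignedMeasure, VectorMeasure.sub_apply,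
    Measure.toSignedMeasure_apply_measurable hA, Measure.toSignedMeasure_apply_measurable hA]
  rfl

lemma TVnorm_eq (s : SignedMeasure X) :
    TVnorm s = (s.toJordanDecomposition.posPart Set.univ).toReal +
      (s.toJordanDecomposition.negPart Set.univ).toReal := by
  rw [TVnorm, SignedMeasure.totalVariation, Measure.add_apply,
    ENNReal.toReal_add (measure_ne_top _ _) (measure_ne_top _ _)]

lemma TVnorm_nonneg (s : SignedMeasure X) : 0 ≤ TVnorm s := ENNReal.toReal_nonneg

lemma TVnorm_zero : TVnorm (0 : SignedMeasure X) = 0 := by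
  rw [TVnorm, SignedMeasure.totalVariation_zero]; simp

lemma diff_le_TVnorm (s : SignedMeasure X) {A B : Set X} (hA : MeasurableSet A)
    (hB : MeasurableSet B) : s A - s B ≤ TVnorm s := by
  rw [sm_apply s hA, sm_apply s hB, TVnorm_eq]
  have h1 : (s.toJordanDecomposition.posPart A).toReal ≤
      (s.toJordanDecomposition.posPart Set.univ).toReal :=
    ENNReal.toReal_mono (measure_ne_top _ _) (measure_mono (Set.subset_univ _))
  have h2 : (s.toJordanDecomposition.negPart B).toReal ≤
      (s.toJordanDecomposition.negPart Set.univ).toReal :=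
    ENNReal.toReal_mono (measure_ne_top _ _) (measure_mono (Set.subset_univ _))
  have h3 : (0:ℝ) ≤ (s.toJordanDecomposition.negPart A).toReal := ENNReal.toReal_nonneg
  have h4 : (0:ℝ) ≤ (s.toJordanDecomposition.posPart B).toReal := ENNReal.toReal_nonneg
  linarith

lemma TVnorm_add_le (s t : SignedMeasure X) : TVnorm (s + t) ≤ TVnorm s + TVnorm t := by
  obtain ⟨i, hi₁, hi₂, hi₃, hpos, hneg⟩ := (s + t).toJordanDecomposition_spec
  have hp : ((s + t).toJordanDecomposition.posPart Set.univ).toReal = (s + t) i := by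
    rw [hpos, SignedMeasure.toMeasureOfZeroLE_apply _ hi₂ hi₁ MeasurableSet.univ]
    simp [Set.inter_univ]
  have hn : ((s + t).toJordanDecomposition.negPart Set.univ).toReal = -(s + t) iᶜ := by
    rw [hneg, SignedMeasure.toMeasureOfLEZero_apply _ hi₃ hi₁.compl MeasurableSet.univ]
    simp [Set.inter_univ]
  rw [TVnorm_eq, hp, hn]
  have h1 := diff_le_TVnorm s hi₁ hi₁.compl
  have h2 := diff_le_TVnorm t hi₁ hi₁.compl
  have hadd : (s + t) i = s i + t i := VectorMeasure.add_apply s t i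
  have hadd' : (s + t) iᶜ = s iᶜ + t iᶜ := VectorMeasure.add_apply s t iᶜ
  linarith

lemma TVnorm_smul (c : ℝ) (s : SignedMeasure X) : TVnorm (c • s) = |c| * TVnorm s := by
  rw [TVnorm_eq, TVnorm_eq, SignedMeasure.toJordanDecomposition_smul_real]
  rcases le_or_gt 0 c with hc | hc
  · rw [JordanDecomposition.real_smul_posPart_nonneg _ _ hc,
      JordanDecomposition.real_smul_negPart_nonneg _ _ hc, abs_of_nonneg hc]
    simp only [Measure.smul_apply, ENNReal.smul_def, smul_eq_mul, ENNReal.toReal_mul,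
      ENNReal.coe_toReal, Real.coe_toNNReal c hc]
    ring
  · rw [JordanDecomposition.real_smul_posPart_neg _ _ hc,
      JordanDecomposition.real_smul_negPart_neg _ _ hc, abs_of_neg hc]
    simp only [Measure.smul_apply, ENNReal.smul_def, smul_eq_mul, ENNReal.toReal_mul,
      ENNReal.coe_toReal, Real.coe_toNNReal (-c) (by linarith)]
    ring

end TV

section helpers
variable {X : Type*} [MeasurableSpace X]

lemma jordan_add_measures (s t : SignedMeasure X) :
    (s + t).toJordanDecomposition.posPart +
      (s.toJordanDecomposition.negPart + t.toJordanDecomposition.negPart) =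
    (s + t).toJordanDecomposition.negPart +
      (s.toJordanDecomposition.posPart + t.toJordanDecomposition.posPart) := by
  apply Measure.ext
  intro A hA
  have h1 := sm_apply s hA
  have h2 := sm_apply t hA
  have h3 := sm_apply (s + t) hA
  have hst : (s + t) A = s A + t A := VectorMeasure.add_apply s t A
  rw [Measure.add_apply, Measure.add_apply, Measure.add_apply, Measure.add_apply]
  apply (ENNReal.toReal_eq_toReal_iff' ?_ ?_).mp
  · rw [ENNReal.toReal_add (measure_ne_top _ _) (ENNReal.add_ne_top.2
      ⟨measure_ne_top _ _, measure_ne_top _ _⟩),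
      ENNReal.toReal_add (measure_ne_top _ _) (ENNReal.add_ne_top.2
      ⟨measure_ne_top _ _, measure_ne_top _ _⟩),
      ENNReal.toReal_add (measure_ne_top _ _) (measure_ne_top _ _),
      ENNReal.toReal_add (measure_ne_top _ _) (measure_ne_top _ _)]
    linarith
  · exact ENNReal.add_ne_top.2 ⟨measure_ne_top _ _, ENNReal.add_ne_top.2
      ⟨measure_ne_top _ _, measure_ne_top _ _⟩⟩
  · exact ENNReal.add_ne_top.2 ⟨measure_ne_top _ _, ENNReal.add_ne_top.2
      ⟨measure_ne_top _ _, measure_ne_top _ _⟩⟩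

lemma sIntegral_add [TopologicalSpace X] [OpensMeasurableSpace X] [CompactSpace X]
    (s t : SignedMeasure X) {f : X → ℝ} (hf : Continuous f) :
    sIntegral (s + t) f = sIntegral s f + sIntegral t f := by
  have key : ∫ x, f x ∂((s + t).toJordanDecomposition.posPart +
      (s.toJordanDecomposition.negPart + t.toJordanDecomposition.negPart)) =
      ∫ x, f x ∂((s + t).toJordanDecomposition.negPart +
      (s.toJordanDecomposition.posPart + t.toJordanDecomposition.posPart)) := by
    rw [jordan_add_measures]
  rw [integral_add_measure (cont_integrable hf _) ((cont_integrable hf _).add_measure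
      (cont_integrable hf _)),
    integral_add_measure (cont_integrable hf _) (cont_integrable hf _),
    integral_add_measure (cont_integrable hf _) ((cont_integrable hf _).add_measure
      (cont_integrable hf _)),
    integral_add_measure (cont_integrable hf _) (cont_integrable hf _)] at key
  unfold sIntegral
  linarith
end helpers

set_option linter.unusedSectionVars false
section KR
variable {X : Type*} [MetricSpace X] [CompactSpace X] [MeasurableSpace X] [BorelSpace X]

def KRset (ξ : SignedMeasure X) : Set ℝ :=
  {r : ℝ | ∃ π : Measure (X × X), IsFiniteMeasure π ∧
    (∀ A : Set X, MeasurableSet A →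
      ξ A = (π (Set.univ ×ˢ A)).toReal - (π (A ×ˢ Set.univ)).toReal) ∧
    r = ∫ z, dist z.1 z.2 ∂π}

lemma KRnorm_eq_sInf (ξ : SignedMeasure X) : KRnorm ξ = sInf (KRset ξ) := rfl

lemma KRset_nonneg {ξ : SignedMeasure X} : ∀ r ∈ KRset ξ, (0:ℝ) ≤ r := by
  rintro r ⟨π, hπ, hc, rfl⟩
  exact integral_nonneg fun z => dist_nonneg

lemma KRset_bddBelow (ξ : SignedMeasure X) : BddBelow (KRset ξ) :=
  ⟨0, fun r hr => KRset_nonneg r hr⟩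

lemma KRnorm_nonneg (ξ : SignedMeasure X) : 0 ≤ KRnorm ξ :=
  Real.sInf_nonneg KRset_nonneg

lemma KRnorm_zero : KRnorm (0 : SignedMeasure X) = 0 := by
  refine le_antisymm ?_ (KRnorm_nonneg 0)
  refine csInf_le (KRset_bddBelow 0) ⟨0, inferInstance, fun A hA => by simp, by simp⟩

lemma KRset_nonempty {ξ : SignedMeasure X} (hξ : ξ Set.univ = 0) : (KRset ξ).Nonempty := by
  set a := ξ.toJordanDecomposition.posPart with ha
  set b := ξ.toJordanDecomposition.negPart with hb
  have hm : a Set.univ = b Set.univ := by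
    have := sm_apply ξ MeasurableSet.univ
    rw [hξ] at this
    exact (ENNReal.toReal_eq_toReal_iff' (measure_ne_top _ _) (measure_ne_top _ _)).mp (by linarith)
  rcases eq_or_ne (a Set.univ) 0 with h0 | h0
  · have ha0 : a = 0 := Measure.measure_univ_eq_zero.mp h0
    have hb0 : b = 0 := Measure.measure_univ_eq_zero.mp (hm ▸ h0)
    refine ⟨0, 0, inferInstance, fun A hA => ?_, by simp⟩
    rw [sm_apply ξ hA, ← ha, ← hb, ha0, hb0]
    simp
  · set m := a Set.univ with hmdef
    have hmtop : m ≠ ⊤ := measure_ne_top a _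
    refine ⟨_, m⁻¹ • b.prod a, ?_, fun A hA => ?_, rfl⟩
    · refine ⟨?_⟩
      rw [Measure.smul_apply, ← Set.univ_prod_univ, Measure.prod_prod, ← hm, smul_eq_mul,
        ← mul_assoc, ENNReal.inv_mul_cancel h0 hmtop, one_mul]
      exact (measure_lt_top a _)
    · have e1 : (m⁻¹ • b.prod a) (Set.univ ×ˢ A) = a A := by
        rw [Measure.smul_apply, Measure.prod_prod, ← hm, smul_eq_mul, ← mul_assoc,
          ENNReal.inv_mul_cancel h0 hmtop, one_mul]
      have e2 : (m⁻¹ • b.prod a) (A ×ˢ Set.univ) = b A := by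
        rw [Measure.smul_apply, Measure.prod_prod, ← hmdef, smul_eq_mul, mul_comm (b A) m,
          ← mul_assoc, ENNReal.inv_mul_cancel h0 hmtop, one_mul]
      rw [e1, e2, sm_apply ξ hA]

lemma swap_preimage_prod (A : Set X) :
    Prod.swap ⁻¹' (Set.univ ×ˢ A) = A ×ˢ (Set.univ : Set X) := by
  ext z
  simp [Set.mem_prod, and_comm]

lemma KR_mem_smul {ξ : SignedMeasure X} {r : ℝ} (c : ℝ) (hr : r ∈ KRset ξ) :
    |c| * r ∈ KRset (c • ξ) := by
  obtain ⟨π, hfin, hcons, rfl⟩ := hr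
  by_cases hc : 0 ≤ c
  · refine ⟨ENNReal.ofReal c • π, ?_, fun A hA => ?_, ?_⟩
    · refine ⟨?_⟩
      rw [Measure.smul_apply, smul_eq_mul]
      exact ENNReal.mul_lt_top ofReal_lt_top (measure_lt_top _ _)
    · rw [VectorMeasure.smul_apply, smul_eq_mul, hcons A hA, Measure.smul_apply,
        Measure.smul_apply, smul_eq_mul, smul_eq_mul, ENNReal.toReal_mul, ENNReal.toReal_mul,
        ENNReal.toReal_ofReal hc]
      ring
    · rw [integral_smul_measure, ENNReal.toReal_ofReal hc, abs_of_nonneg hc, smul_eq_mul]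

  · push_neg at hc
    have hswfin : IsFiniteMeasure (π.map Prod.swap) :=
      ⟨by rw [Measure.map_apply measurable_swap MeasurableSet.univ]; exact measure_lt_top π _⟩
    refine ⟨ENNReal.ofReal (-c) • π.map Prod.swap, ?_, fun A hA => ?_, ?_⟩
    · refine ⟨?_⟩
      rw [Measure.smul_apply, smul_eq_mul]
      exact ENNReal.mul_lt_top ofReal_lt_top (measure_lt_top _ _)
    · have m1 : π.map Prod.swap (Set.univ ×ˢ A) = π (A ×ˢ Set.univ) := by
        rw [Measure.map_apply measurable_swap (MeasurableSet.univ.prod hA), swap_preimage_prod]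
      have m2 : π.map Prod.swap (A ×ˢ Set.univ) = π (Set.univ ×ˢ A) := by
        rw [Measure.map_apply measurable_swap (hA.prod MeasurableSet.univ)]
        congr 1
        ext z
        simp [Set.mem_prod, and_comm]
      rw [VectorMeasure.smul_apply, smul_eq_mul, hcons A hA, Measure.smul_apply,
        Measure.smul_apply, smul_eq_mul, smul_eq_mul, ENNReal.toReal_mul, ENNReal.toReal_mul,
        m1, m2, ENNReal.toReal_ofReal (by linarith)]
      ring
    · rw [integral_smul_measure, ENNReal.toReal_ofReal (by linarith : (0:ℝ) ≤ -c),
        abs_of_neg hc, smul_eq_mul]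
      congr 1
      rw [integral_map measurable_swap.aemeasurable]
      · simp only [Prod.fst_swap, Prod.snd_swap]
        exact integral_congr_ae (Filter.Eventually.of_forall fun z => dist_comm z.1 z.2)
      · exact (continuous_fst.dist continuous_snd).aestronglyMeasurable

lemma KR_mem_add {ξ η : SignedMeasure X} {r₁ r₂ : ℝ} (h₁ : r₁ ∈ KRset ξ) (h₂ : r₂ ∈ KRset η) :
    r₁ + r₂ ∈ KRset (ξ + η) := by
  obtain ⟨π₁, hfin₁, hcons₁, rfl⟩ := h₁
  obtain ⟨π₂, hfin₂, hcons₂, rfl⟩ := h₂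
  have hd : Continuous fun z : X × X => dist z.1 z.2 := continuous_fst.dist continuous_snd
  refine ⟨π₁ + π₂, inferInstance, fun A hA => ?_, ?_⟩
  · rw [VectorMeasure.add_apply, hcons₁ A hA, hcons₂ A hA, Measure.add_apply, Measure.add_apply,
      ENNReal.toReal_add (measure_ne_top _ _) (measure_ne_top _ _),
      ENNReal.toReal_add (measure_ne_top _ _) (measure_ne_top _ _)]
    ring
  · rw [integral_add_measure (cont_integrable hd _) (cont_integrable hd _)]

lemma KRnorm_add_le {ξ η : SignedMeasure X} (hξ : ξ Set.univ = 0) (hη : η Set.univ = 0) :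
    KRnorm (ξ + η) ≤ KRnorm ξ + KRnorm η := by
  have key : ∀ r₁ ∈ KRset ξ, ∀ r₂ ∈ KRset η, KRnorm (ξ + η) ≤ r₁ + r₂ := fun r₁ h₁ r₂ h₂ =>
    csInf_le (KRset_bddBelow _) (KR_mem_add h₁ h₂)
  have step1 : ∀ r₂ ∈ KRset η, KRnorm (ξ + η) - r₂ ≤ KRnorm ξ := by
    intro r₂ h₂
    refine le_csInf (KRset_nonempty hξ) fun r₁ h₁ => ?_
    linarith [key r₁ h₁ r₂ h₂]
  have step2 : KRnorm (ξ + η) - KRnorm ξ ≤ KRnorm η := by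
    refine le_csInf (KRset_nonempty hη) fun r₂ h₂ => ?_
    linarith [step1 r₂ h₂]
  linarith

lemma KRnorm_smul_le (c : ℝ) {ξ : SignedMeasure X} (hξ : ξ Set.univ = 0) :
    KRnorm (c • ξ) ≤ |c| * KRnorm ξ := by
  rcases eq_or_ne c 0 with rfl | hc
  · simp [zero_smul, KRnorm_zero]
  · have habs : 0 < |c| := abs_pos.mpr hc
    have h1 : ∀ r ∈ KRset ξ, |c|⁻¹ * KRnorm (c • ξ) ≤ r := by
      intro r hr
      have := csInf_le (KRset_bddBelow (c • ξ)) (KR_mem_smul c hr)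
      rw [inv_mul_le_iff₀ habs]
      exact this.trans_eq rfl
    have := le_csInf (KRset_nonempty hξ) h1
    calc KRnorm (c • ξ) = |c| * (|c|⁻¹ * KRnorm (c • ξ)) := by
          field_simp
      _ ≤ |c| * KRnorm ξ := by
          exact mul_le_mul_of_nonneg_left this habs.le

lemma KRnorm_smul (c : ℝ) {ξ : SignedMeasure X} (hξ : ξ Set.univ = 0) :
    KRnorm (c • ξ) = |c| * KRnorm ξ := by
  rcases eq_or_ne c 0 with rfl | hc
  · simp [zero_smul, KRnorm_zero]
  · refine le_antisymm (KRnorm_smul_le c hξ) ?_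
    have hξ' : (c • ξ) Set.univ = 0 := by
      rw [VectorMeasure.smul_apply, hξ, smul_zero]
    have := KRnorm_smul_le c⁻¹ hξ'
    rw [smul_smul, inv_mul_cancel₀ hc, one_smul, abs_inv] at this
    calc |c| * KRnorm ξ ≤ |c| * (|c|⁻¹ * KRnorm (c • ξ)) :=
          mul_le_mul_of_nonneg_left this (abs_nonneg c)
      _ = KRnorm (c • ξ) := by field_simp

end KR

section PK
variable {X : Type*} [MetricSpace X] [CompactSpace X] [MeasurableSpace X] [BorelSpace X]
variable {p : ℝ≥0∞}

def PKset (p : ℝ≥0∞) (μ : SignedMeasure X) : Set ℝ :=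
  {r : ℝ | ∃ ξ : SignedMeasure X, ξ Set.univ = 0 ∧
    r = lp2 p (KRnorm ξ) (TVnorm (μ - ξ))}

lemma pKnorm_eq_sInf (μ : SignedMeasure X) : pKnorm p μ = sInf (PKset p μ) := rfl

lemma PKset_nonneg {μ : SignedMeasure X} : ∀ r ∈ PKset p μ, (0:ℝ) ≤ r := by
  rintro r ⟨ξ, hξ, rfl⟩
  exact lp2_nonneg (KRnorm_nonneg ξ) (TVnorm_nonneg _)

lemma PKset_bddBelow (μ : SignedMeasure X) : BddBelow (PKset p μ) :=
  ⟨0, fun r hr => PKset_nonneg r hr⟩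

lemma PKset_nonempty (μ : SignedMeasure X) : (PKset p μ).Nonempty :=
  ⟨lp2 p (KRnorm 0) (TVnorm (μ - 0)), 0, VectorMeasure.zero_apply _, rfl⟩

lemma pKnorm_nonneg (μ : SignedMeasure X) : 0 ≤ pKnorm p μ :=
  Real.sInf_nonneg PKset_nonneg

lemma pKnorm_zero (hp : 1 ≤ p) : pKnorm p (0 : SignedMeasure X) = 0 := by
  refine le_antisymm ?_ (pKnorm_nonneg 0)
  have hmem : (0:ℝ) ∈ PKset p (0 : SignedMeasure X) := by
    refine ⟨0, VectorMeasure.zero_apply _, ?_⟩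
    rw [sub_zero, KRnorm_zero, TVnorm_zero, lp2_zero hp]
  exact csInf_le (PKset_bddBelow 0) hmem

lemma PK_mem_smul (hp : 1 ≤ p) {μ : SignedMeasure X} {r : ℝ} (c : ℝ) (hr : r ∈ PKset p μ) :
    |c| * r ∈ PKset p (c • μ) := by
  obtain ⟨ξ, hξ, rfl⟩ := hr
  refine ⟨c • ξ, by rw [VectorMeasure.smul_apply, hξ, smul_zero], ?_⟩
  have hs : c • μ - c • ξ = c • (μ - ξ) := (smul_sub c μ ξ).symm
  rw [hs, KRnorm_smul c hξ, TVnorm_smul,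
    lp2_smul hp (abs_nonneg c) (KRnorm_nonneg ξ) (TVnorm_nonneg _)]

lemma pKnorm_smul_le (hp : 1 ≤ p) (c : ℝ) (μ : SignedMeasure X) :
    pKnorm p (c • μ) ≤ |c| * pKnorm p μ := by
  rcases eq_or_ne c 0 with rfl | hc
  · simp [zero_smul, pKnorm_zero hp]
  · have habs : 0 < |c| := abs_pos.mpr hc
    have h1 : ∀ r ∈ PKset p μ, |c|⁻¹ * pKnorm p (c • μ) ≤ r := by
      intro r hr
      rw [inv_mul_le_iff₀ habs]
      exact csInf_le (PKset_bddBelow (c • μ)) (PK_mem_smul hp c hr)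
    have h2 := le_csInf (PKset_nonempty μ) h1
    calc pKnorm p (c • μ) = |c| * (|c|⁻¹ * pKnorm p (c • μ)) := by field_simp
      _ ≤ |c| * pKnorm p μ := mul_le_mul_of_nonneg_left h2 habs.le

lemma pKnorm_smul (hp : 1 ≤ p) (c : ℝ) (μ : SignedMeasure X) :
    pKnorm p (c • μ) = |c| * pKnorm p μ := by
  rcases eq_or_ne c 0 with rfl | hc
  · simp [zero_smul, pKnorm_zero hp]
  · refine le_antisymm (pKnorm_smul_le hp c μ) ?_
    have := pKnorm_smul_le hp c⁻¹ (c • μ)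
    rw [smul_smul, inv_mul_cancel₀ hc, one_smul, abs_inv] at this
    calc |c| * pKnorm p μ ≤ |c| * (|c|⁻¹ * pKnorm p (c • μ)) :=
          mul_le_mul_of_nonneg_left this (abs_nonneg c)
      _ = pKnorm p (c • μ) := by field_simp

lemma pKnorm_add_le (hp : 1 ≤ p) (μ ν : SignedMeasure X) :
    pKnorm p (μ + ν) ≤ pKnorm p μ + pKnorm p ν := by
  have key : ∀ r₁ ∈ PKset p μ, ∀ r₂ ∈ PKset p ν, pKnorm p (μ + ν) ≤ r₁ + r₂ := by
    rintro r₁ ⟨ξ, hξ, rfl⟩ r₂ ⟨η, hη, rfl⟩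
    have hmem : lp2 p (KRnorm (ξ + η)) (TVnorm (μ + ν - (ξ + η))) ∈ PKset p (μ + ν) :=
      ⟨ξ + η, by rw [VectorMeasure.add_apply, hξ, hη, add_zero], rfl⟩
    refine (csInf_le (PKset_bddBelow _) hmem).trans ?_
    have hrw : μ + ν - (ξ + η) = (μ - ξ) + (ν - η) := by abel
    calc lp2 p (KRnorm (ξ + η)) (TVnorm (μ + ν - (ξ + η)))
        ≤ lp2 p (KRnorm ξ + KRnorm η) (TVnorm (μ - ξ) + TVnorm (ν - η)) := by
          apply lp2_mono hp (KRnorm_nonneg _) (TVnorm_nonneg _) (KRnorm_add_le hξ hη)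
          rw [hrw]
          exact TVnorm_add_le _ _
      _ ≤ _ := lp2_add_le hp (KRnorm_nonneg _) (KRnorm_nonneg _) (TVnorm_nonneg _)
          (TVnorm_nonneg _)
  have step1 : ∀ r₂ ∈ PKset p ν, pKnorm p (μ + ν) - r₂ ≤ pKnorm p μ := by
    intro r₂ h₂
    refine le_csInf (PKset_nonempty μ) fun r₁ h₁ => ?_
    linarith [key r₁ h₁ r₂ h₂]
  have step2 : pKnorm p (μ + ν) - pKnorm p μ ≤ pKnorm p ν := by
    refine le_csInf (PKset_nonempty ν) fun r₂ h₂ => ?_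
    linarith [step1 r₂ h₂]
  linarith

-- #### definiteness

lemma sIntegral_KR_le {ξ : SignedMeasure X} {f : X → ℝ} (hf : Continuous f) {L : ℝ}
    (hL : ∀ x y, |f x - f y| ≤ L * dist x y) {r : ℝ} (hr : r ∈ KRset ξ) :
    |sIntegral ξ f| ≤ L * r := by
  obtain ⟨π, hfin, hcons, rfl⟩ := hr
  set ρ₁ := π.map Prod.fst with hρ₁def
  set ρ₂ := π.map Prod.snd with hρ₂def
  haveI : IsFiniteMeasure ρ₁ :=
    ⟨by rw [hρ₁def, Measure.map_apply measurable_fst MeasurableSet.univ];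
        exact measure_lt_top π _⟩
  haveI : IsFiniteMeasure ρ₂ :=
    ⟨by rw [hρ₂def, Measure.map_apply measurable_snd MeasurableSet.univ];
        exact measure_lt_top π _⟩
  have hρ₂A : ∀ A : Set X, MeasurableSet A → ρ₂ A = π (Set.univ ×ˢ A) := by
    intro A hA
    rw [hρ₂def, Measure.map_apply measurable_snd hA]
    congr 1
    ext z; simp
  have hρ₁A : ∀ A : Set X, MeasurableSet A → ρ₁ A = π (A ×ˢ Set.univ) := by
    intro A hA
    rw [hρ₁def, Measure.map_apply measurable_fst hA]
    congr 1
    ext z; simp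
  have key : ξ.toJordanDecomposition.posPart + ρ₁ = ξ.toJordanDecomposition.negPart + ρ₂ := by
    apply Measure.ext
    intro A hA
    rw [Measure.add_apply, Measure.add_apply, hρ₁A A hA, hρ₂A A hA]
    apply (ENNReal.toReal_eq_toReal_iff' ?_ ?_).mp
    · rw [ENNReal.toReal_add (measure_ne_top _ _) (measure_ne_top _ _),
        ENNReal.toReal_add (measure_ne_top _ _) (measure_ne_top _ _)]
      have h1 := sm_apply ξ hA
      have h2 := hcons A hA
      linarith
    · exact ENNReal.add_ne_top.2 ⟨measure_ne_top _ _, measure_ne_top _ _⟩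
    · exact ENNReal.add_ne_top.2 ⟨measure_ne_top _ _, measure_ne_top _ _⟩
  have hi : ∫ x, f x ∂ξ.toJordanDecomposition.posPart + ∫ x, f x ∂ρ₁ =
      ∫ x, f x ∂ξ.toJordanDecomposition.negPart + ∫ x, f x ∂ρ₂ := by
    rw [← integral_add_measure (cont_integrable hf _) (cont_integrable hf _), key,
      integral_add_measure (cont_integrable hf _) (cont_integrable hf _)]
  have hs : sIntegral ξ f = ∫ x, f x ∂ρ₂ - ∫ x, f x ∂ρ₁ := by
    unfold sIntegral; linarith
  have e2 : ∫ x, f x ∂ρ₂ = ∫ z : X × X, f z.2 ∂π :=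
    integral_map measurable_snd.aemeasurable hf.aestronglyMeasurable
  have e1 : ∫ x, f x ∂ρ₁ = ∫ z : X × X, f z.1 ∂π :=
    integral_map measurable_fst.aemeasurable hf.aestronglyMeasurable
  have hint2 : Integrable (fun z : X × X => f z.2) π :=
    cont_integrable (hf.comp continuous_snd) π
  have hint1 : Integrable (fun z : X × X => f z.1) π :=
    cont_integrable (hf.comp continuous_fst) π
  rw [hs, e1, e2, ← integral_sub hint2 hint1]
  have hdint : Integrable (fun z : X × X => L * dist z.1 z.2) π :=
    (cont_integrable (continuous_fst.dist continuous_snd) π).const_mul L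
  calc |∫ z : X × X, (f z.2 - f z.1) ∂π| ≤ ∫ z : X × X, |f z.2 - f z.1| ∂π := by
        simpa [Real.norm_eq_abs] using norm_integral_le_integral_norm (fun z : X × X => f z.2 - f z.1) (μ := π)
    _ ≤ ∫ z : X × X, L * dist z.1 z.2 ∂π := by
        apply integral_mono (hint2.sub hint1).abs hdint
        intro z
        calc |f z.2 - f z.1| ≤ L * dist z.2 z.1 := hL z.2 z.1
          _ = L * dist z.1 z.2 := by rw [dist_comm]
    _ = L * ∫ z : X × X, dist z.1 z.2 ∂π := integral_const_mul L _

lemma sIntegral_KRnorm_le {ξ : SignedMeasure X} (hξ : ξ Set.univ = 0) {f : X → ℝ}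
    (hf : Continuous f) {L : ℝ} (hL0 : 0 ≤ L) (hL : ∀ x y, |f x - f y| ≤ L * dist x y) :
    |sIntegral ξ f| ≤ L * KRnorm ξ := by
  rcases eq_or_lt_of_le hL0 with rfl | hLpos
  · obtain ⟨r₀, hr₀⟩ := KRset_nonempty hξ
    simpa using sIntegral_KR_le hf hL hr₀
  · rw [KRnorm_eq_sInf, mul_comm, ← div_le_iff₀ hLpos]
    refine le_csInf (KRset_nonempty hξ) fun r hr => ?_
    rw [div_le_iff₀ hLpos, mul_comm]
    exact sIntegral_KR_le hf hL hr

lemma sIntegral_TV_le (σ : SignedMeasure X) {f : X → ℝ} (hf : Continuous f) {B : ℝ}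
    (hB : ∀ x, |f x| ≤ B) : |sIntegral σ f| ≤ B * TVnorm σ := by
  have h1 : |∫ x, f x ∂σ.toJordanDecomposition.posPart| ≤
      B * (σ.toJordanDecomposition.posPart Set.univ).toReal := by
    calc |∫ x, f x ∂σ.toJordanDecomposition.posPart| ≤
        ∫ x, |f x| ∂σ.toJordanDecomposition.posPart := by
          simpa [Real.norm_eq_abs] using norm_integral_le_integral_norm f
            (μ := σ.toJordanDecomposition.posPart)
      _ ≤ ∫ _x, B ∂σ.toJordanDecomposition.posPart :=
          integral_mono (cont_integrable hf _).abs (integrable_const B) hB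
      _ = (σ.toJordanDecomposition.posPart Set.univ).toReal • B := integral_const B
      _ = B * (σ.toJordanDecomposition.posPart Set.univ).toReal := by
          rw [smul_eq_mul, mul_comm]
  have h2 : |∫ x, f x ∂σ.toJordanDecomposition.negPart| ≤
      B * (σ.toJordanDecomposition.negPart Set.univ).toReal := by
    calc |∫ x, f x ∂σ.toJordanDecomposition.negPart| ≤
        ∫ x, |f x| ∂σ.toJordanDecomposition.negPart := by
          simpa [Real.norm_eq_abs] using norm_integral_le_integral_norm f
            (μ := σ.toJordanDecomposition.negPart)
      _ ≤ ∫ _x, B ∂σ.toJordanDecomposition.negPart :=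
          integral_mono (cont_integrable hf _).abs (integrable_const B) hB
      _ = (σ.toJordanDecomposition.negPart Set.univ).toReal • B := integral_const B
      _ = B * (σ.toJordanDecomposition.negPart Set.univ).toReal := by
          rw [smul_eq_mul, mul_comm]
  rw [TVnorm_eq, mul_add]
  unfold sIntegral
  have := abs_sub (∫ x, f x ∂σ.toJordanDecomposition.posPart)
    (∫ x, f x ∂σ.toJordanDecomposition.negPart)
  calc |∫ x, f x ∂σ.toJordanDecomposition.posPart - ∫ x, f x ∂σ.toJordanDecomposition.negPart|
      ≤ |∫ x, f x ∂σ.toJordanDecomposition.posPart| +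
        |∫ x, f x ∂σ.toJordanDecomposition.negPart| := abs_sub _ _
    _ ≤ _ := add_le_add h1 h2

lemma sIntegral_eq_zero (hp : 1 ≤ p) {μ : SignedMeasure X} (h : pKnorm p μ = 0)
    {f : X → ℝ} (hf : Continuous f) {L B : ℝ} (hL0 : 0 ≤ L) (hB0 : 0 ≤ B)
    (hL : ∀ x y, |f x - f y| ≤ L * dist x y) (hB : ∀ x, |f x| ≤ B) :
    sIntegral μ f = 0 := by
  have hbound : ∀ ε > (0:ℝ), |sIntegral μ f| ≤ (L + B) * ε := by
    intro ε hε
    have hne : (PKset p μ).Nonempty := PKset_nonempty μ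
    obtain ⟨r, hrS, hrlt⟩ := Real.lt_sInf_add_pos hne hε
    rw [← pKnorm_eq_sInf, h, zero_add] at hrlt
    obtain ⟨ξ, hξ0, rfl⟩ := hrS
    set σ := μ - ξ with hσdef
    have hμeq : μ = ξ + σ := by rw [hσdef]; abel
    have hsum : sIntegral μ f = sIntegral ξ f + sIntegral σ f := by
      conv_lhs => rw [hμeq]
      exact sIntegral_add ξ σ hf
    have hKR : KRnorm ξ ≤ lp2 p (KRnorm ξ) (TVnorm σ) :=
      le_lp2_left hp (KRnorm_nonneg _) (TVnorm_nonneg _)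
    have hTV : TVnorm σ ≤ lp2 p (KRnorm ξ) (TVnorm σ) :=
      le_lp2_right hp (KRnorm_nonneg _) (TVnorm_nonneg _)
    have h1 : |sIntegral ξ f| ≤ L * KRnorm ξ := sIntegral_KRnorm_le hξ0 hf hL0 hL
    have h2 : |sIntegral σ f| ≤ B * TVnorm σ := sIntegral_TV_le σ hf hB
    have hKRε : KRnorm ξ ≤ ε := le_of_lt (lt_of_le_of_lt hKR hrlt)
    have hTVε : TVnorm σ ≤ ε := le_of_lt (lt_of_le_of_lt hTV hrlt)
    calc |sIntegral μ f| = |sIntegral ξ f + sIntegral σ f| := by rw [hsum]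
      _ ≤ |sIntegral ξ f| + |sIntegral σ f| := abs_add_le _ _
      _ ≤ L * KRnorm ξ + B * TVnorm σ := add_le_add h1 h2
      _ ≤ L * ε + B * ε := add_le_add (mul_le_mul_of_nonneg_left hKRε hL0)
          (mul_le_mul_of_nonneg_left hTVε hB0)
      _ = (L + B) * ε := by ring
  have habs : |sIntegral μ f| ≤ 0 := by
    by_contra hcon
    push_neg at hcon
    have hCpos : (0:ℝ) < L + B + 1 := by linarith
    have hεpos : (0:ℝ) < |sIntegral μ f| / (2 * (L + B + 1)) := by positivity
    have := hbound _ hεpos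
    have hfrac : (L + B) * (|sIntegral μ f| / (2 * (L + B + 1))) < |sIntegral μ f| := by
      rw [div_eq_inv_mul, ← mul_assoc]
      have : (L + B) * (2 * (L + B + 1))⁻¹ < 1 := by
        rw [mul_inv_lt_iff₀ (by linarith), one_mul]
        linarith
      nlinarith
    linarith
  exact abs_eq_zero.mp (le_antisymm habs (abs_nonneg _))

lemma pKnorm_eq_zero_imp (hp : 1 ≤ p) {μ : SignedMeasure X} (h : pKnorm p μ = 0) : μ = 0 := by
  set a := μ.toJordanDecomposition.posPart with hadef
  set b := μ.toJordanDecomposition.negPart with hbdef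
  have hclosed : ∀ F : Set X, IsClosed F → a F = b F := by
    intro F hF
    rcases F.eq_empty_or_nonempty with rfl | hFne
    · simp
    · set g : ℕ → X → ℝ := fun n x => max (1 - n * Metric.infDist x F) 0 with hgdef
      have hgc : ∀ n, Continuous (g n) := fun n =>
        ((continuous_const.sub (continuous_const.mul (Metric.continuous_infDist_pt F))).max
          continuous_const)
      have hg0 : ∀ n x, 0 ≤ g n x := fun n x => le_max_right _ _
      have hg1 : ∀ n x, g n x ≤ 1 := by
        intro n x
        apply max_le _ zero_le_one
        have : (0:ℝ) ≤ n * Metric.infDist x F :=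
          mul_nonneg (Nat.cast_nonneg n) Metric.infDist_nonneg
        linarith
      have hgb : ∀ n x, |g n x| ≤ 1 := fun n x => by
        rw [abs_of_nonneg (hg0 n x)]; exact hg1 n x
      have hgL : ∀ (n : ℕ) (x y : X), |g n x - g n y| ≤ (n:ℝ) * dist x y := by
        intro n x y
        calc |g n x - g n y| ≤ |(1 - n * Metric.infDist x F) - (1 - n * Metric.infDist y F)| :=
              abs_max_sub_max_le_abs _ _ _
          _ = (n:ℝ) * |Metric.infDist x F - Metric.infDist y F| := by
              have hrw : (1 - (n:ℝ) * Metric.infDist x F) - (1 - (n:ℝ) * Metric.infDist y F) =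
                  (n:ℝ) * (Metric.infDist y F - Metric.infDist x F) := by ring
              rw [hrw, abs_mul, abs_of_nonneg (Nat.cast_nonneg n : (0:ℝ) ≤ (n:ℝ)),
                abs_sub_comm]
          _ ≤ (n:ℝ) * dist x y := by
              apply mul_le_mul_of_nonneg_left _ (Nat.cast_nonneg n)
              have := (Metric.lipschitz_infDist_pt F).dist_le_mul x y
              rwa [Real.dist_eq, NNReal.coe_one, one_mul] at this
      have hint : ∀ n, sIntegral μ (g n) = 0 := fun n =>
        sIntegral_eq_zero hp h (hgc n) (Nat.cast_nonneg n) zero_le_one (hgL n) (hgb n)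
      have hptw : ∀ x, Tendsto (fun n => g n x) atTop
          (𝓝 (Set.indicator F (fun _ => (1:ℝ)) x)) := by
        intro x
        by_cases hx : x ∈ F
        · have hd : Metric.infDist x F = 0 := Metric.infDist_zero_of_mem hx
          have : ∀ n, g n x = 1 := by
            intro n
            rw [hgdef]
            simp [hd]
        
          rw [Set.indicator_of_mem hx]
          simp only [this]
          exact tendsto_const_nhds
        · have hd : 0 < Metric.infDist x F := by
            rcases (Metric.infDist_nonneg (s := F) (x := x)).lt_or_eq with h' | h'
            · exact h'
            · exact absurd ((hF.mem_iff_infDist_zero hFne).mpr h'.symm) hx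
          rw [Set.indicator_of_notMem hx]
          have hev : ∀ᶠ n : ℕ in atTop, g n x = 0 := by
            obtain ⟨N, hN⟩ := exists_nat_gt (1 / Metric.infDist x F)
            filter_upwards [eventually_ge_atTop N] with n hn
            rw [hgdef]
            simp only
            apply max_eq_right
            have hNd : 1 ≤ (N:ℝ) * Metric.infDist x F := by
              rw [← div_le_iff₀ hd] at *
              exact le_of_lt (lt_of_lt_of_le hN (by exact_mod_cast le_refl (N:ℝ)))
            have : (N:ℝ) * Metric.infDist x F ≤ (n:ℝ) * Metric.infDist x F :=
              mul_le_mul_of_nonneg_right (by exact_mod_cast hn) hd.le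
            linarith
          exact Tendsto.congr' (hev.mono fun n hn => hn.symm) tendsto_const_nhds
      have hconv : ∀ (ν : Measure X), IsFiniteMeasure ν → Tendsto (fun n => ∫ x, g n x ∂ν) atTop
          (𝓝 (∫ x, Set.indicator F (fun _ => (1:ℝ)) x ∂ν)) := by
        intro ν hν
        apply tendsto_integral_of_dominated_convergence (fun _ => (1:ℝ))
        · exact fun n => (hgc n).aestronglyMeasurable
        · exact integrable_const 1
        · exact fun n => Filter.Eventually.of_forall fun x => by
            rw [Real.norm_eq_abs]; exact hgb n x
        · exact Filter.Eventually.of_forall hptw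
      have heq : ∀ n, ∫ x, g n x ∂a = ∫ x, g n x ∂b := by
        intro n
        have := hint n
        unfold sIntegral at this
        rw [← hadef, ← hbdef] at this
        linarith
      have ha' := hconv a inferInstance
      have hb' := hconv b inferInstance
      rw [show (fun n => ∫ x, g n x ∂a) = fun n => ∫ x, g n x ∂b from funext heq] at ha'
      have hlim := tendsto_nhds_unique ha' hb'
      rw [integral_indicator_const (1:ℝ) hF.measurableSet,
        integral_indicator_const (1:ℝ) hF.measurableSet, smul_eq_mul, smul_eq_mul,
        mul_one, mul_one] at hlim
      exact (ENNReal.toReal_eq_toReal_iff' (measure_ne_top _ _) (measure_ne_top _ _)).mp hlim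
  have hab : a = b := by
    refine ext_of_generate_finite {S : Set X | IsClosed S} ?_ isPiSystem_isClosed
      (fun s hs => hclosed s hs) (hclosed Set.univ isClosed_univ)
    rw [BorelSpace.measurable_eq (α := X), borel_eq_generateFrom_isClosed]
  apply VectorMeasure.ext
  intro A hA
  rw [sm_apply μ hA, ← hadef, ← hbdef, hab, VectorMeasure.zero_apply, sub_self]

end PK


/-- `pKnorm p` is a norm on the space of finite signed Borel measures. -/
theorem pKnorm_is_norm {X : Type*} [MetricSpace X] [CompactSpace X]
    [MeasurableSpace X] [BorelSpace X] (p : ℝ≥0∞) (hp : 1 ≤ p) :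
    (∀ μ : SignedMeasure X, 0 ≤ pKnorm p μ) ∧
    (∀ μ : SignedMeasure X, pKnorm p μ = 0 ↔ μ = 0) ∧
    (∀ (c : ℝ) (μ : SignedMeasure X), pKnorm p (c • μ) = |c| * pKnorm p μ) ∧
    (∀ μ ν : SignedMeasure X, pKnorm p (μ + ν) ≤ pKnorm p μ + pKnorm p ν) :=
  ⟨fun μ => pKnorm_nonneg μ,
   fun μ => ⟨fun h => pKnorm_eq_zero_imp hp h, fun hμ => hμ ▸ pKnorm_zero hp⟩,
   fun c μ => pKnorm_smul hp c μ,
   fun μ ν => pKnorm_add_le hp μ ν⟩
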